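/- arXiv:2310.19221 — 2 statements merged into one kernel-verified Lean document; each statement's English description precedes it below -/
import Mathlib

section
/- Let A, A_∞ be invertible d×d matrices and suppose ‖A - A_∞‖ is small. For x ≠ 0 and ξ ≠ 0 let θ = ∠(x, A_∞ ξ), α = ∠(x, A ξ), β = ∠(A ξ, A_∞ ξ) (angles between nonzero vectors). Then the directional derivative of cos θ(x, ξ) in x along the direction A ξ equals (|Aξ|/|x|)·(cos β - cos α · cos θ), which can be rewritten as (|Aξ|/|x|)·(sin²θ + (cos β - 1) + cos θ (cos θ - cos α)). -/
/-!
Write `cos ∠(y, v) = ‖v‖⁻¹ * (⟪y, v⟫ / ‖y‖)`. Since `‖·‖` has derivative `⟪x, ·⟫ / ‖x‖` away from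
the origin, the quotient rule gives the derivative `(⟪u, v⟫ - ⟪x, v⟫ ⟪x, u⟫ / ‖x‖²) / (‖x‖ ‖v‖)`
in the direction `u`, which is `‖u‖ / ‖x‖ * (cos ∠(u, v) - cos ∠(x, u) cos ∠(x, v))`.
-/

open Real InnerProductGeometry
open scoped RealInnerProductSpace

section
variable {E : Type*} [NormedAddCommGroup E] [InnerProductSpace ℝ E] {x : E}

theorem hasFDerivAt_norm_of_ne_zero (hx : x ≠ 0) :
    HasFDerivAt (‖·‖) (‖x‖⁻¹ • innerSL ℝ x) x := by
  have hsqrt := (hasStrictFDerivAt_norm_sq x).hasFDerivAt.sqrt (by positivity)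
  simp only [sqrt_sq (norm_nonneg _)] at hsqrt
  convert hsqrt using 1
  ext u
  simp only [smul_apply, coe_innerSL_apply, smul_eq_mul, one_div, mul_inv_rev, nsmul_eq_mul,
    Nat.cast_ofNat]
  field_simp

theorem hasFDerivAt_inner_div_norm (v : E) (hx : x ≠ 0) :
    HasFDerivAt (fun y ↦ ⟪y, v⟫ / ‖y‖)
      (‖x‖⁻¹ • (innerSL ℝ v - (⟪x, v⟫ / ‖x‖ ^ 2) • innerSL ℝ x)) x := by
  have hinv : HasFDerivAt (fun y ↦ ‖y‖⁻¹) (-(‖x‖ ^ 2)⁻¹ • ‖x‖⁻¹ • innerSL ℝ x) x :=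
    (hasDerivAt_inv (norm_ne_zero_iff.mpr hx)).comp_hasFDerivAt x (hasFDerivAt_norm_of_ne_zero hx)
  have hinner : HasFDerivAt (fun y ↦ ⟪y, v⟫) (innerSL ℝ v) x := by
    simpa only [coe_innerSL_apply, real_inner_comm v] using (innerSL ℝ v).hasFDerivAt
  simp_rw [div_eq_mul_inv]
  refine (hinner.mul hinv).congr_fderiv ?_
  ext u
  simp only [neg_smul, smul_neg, add_apply, neg_apply, smul_apply, sub_apply, coe_innerSL_apply,
    smul_eq_mul]
  field_simp
  ring

theorem hasFDerivAt_cos_angle (v : E) (hx : x ≠ 0) :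
    HasFDerivAt (fun y ↦ cos (angle y v))
      ((‖x‖ * ‖v‖)⁻¹ • (innerSL ℝ v - (⟪x, v⟫ / ‖x‖ ^ 2) • innerSL ℝ x)) x := by
  have hcos : (fun y ↦ cos (angle y v)) = fun y ↦ ‖v‖⁻¹ * (⟪y, v⟫ / ‖y‖) := by
    ext y
    rw [cos_angle]
    ring
  rw [hcos, mul_inv, mul_comm, mul_smul]
  exact (hasFDerivAt_inner_div_norm v hx).const_mul _

theorem fderiv_cos_angle_apply (hx : x ≠ 0) (u v : E) :
    fderiv ℝ (fun y ↦ cos (angle y v)) x u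
      = ‖u‖ / ‖x‖ * (cos (angle u v) - cos (angle x u) * cos (angle x v)) := by
  rw [(hasFDerivAt_cos_angle v hx).fderiv]
  rcases eq_or_ne u 0 with rfl | hu
  · simp
  simp only [mul_inv_rev, smul_apply, sub_apply,
    coe_innerSL_apply, smul_eq_mul, cos_angle, real_inner_comm v u]
  have hu_norm := norm_ne_zero_iff.mpr hu
  field_simp

end

theorem directional_derivative_of_cosine_angle_general
    {d : ℕ}
    (x : EuclideanSpace ℝ (Fin d)) (hx : x ≠ 0)
    (w winf : EuclideanSpace ℝ (Fin d))
    (cθ cα cβ : ℝ)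
    (hcθ : cθ = (inner ℝ x winf : ℝ) / (‖x‖ * ‖winf‖))
    (hcα : cα = (inner ℝ x w : ℝ) / (‖x‖ * ‖w‖))
    (hcβ : cβ = (inner ℝ w winf : ℝ) / (‖w‖ * ‖winf‖)) :
    fderiv ℝ (fun y : EuclideanSpace ℝ (Fin d) =>
        (inner ℝ y winf : ℝ) / (‖y‖ * ‖winf‖)) x w
      = ‖w‖ / ‖x‖ * (cβ - cα * cθ) ∧
    ‖w‖ / ‖x‖ * (cβ - cα * cθ)
      = ‖w‖ / ‖x‖ * ((1 - cθ ^ 2) + (cβ - 1) + cθ * (cθ - cα)) := by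
  rw [← cos_angle] at hcθ hcα hcβ
  subst hcθ hcα hcβ
  refine ⟨?_, by ring⟩
  simp_rw [← cos_angle]
  exact fderiv_cos_angle_apply hx w winf

/-- **Directional derivative of the angle function.**
For invertible matrices `A, A∞`, nonzero `x, ξ`, with
`cos θ = ⟨x, A∞ξ⟩/(|x||A∞ξ|)`, `cos α = ⟨x, Aξ⟩/(|x||Aξ|)`,
`cos β = ⟨Aξ, A∞ξ⟩/(|Aξ||A∞ξ|)`, the derivative of `x ↦ cos θ(x,ξ)` in the
direction `Aξ` equals `(|Aξ|/|x|)(cos β - cos α cos θ)`, which can be rewritten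
as `(|Aξ|/|x|)(sin²θ + (cos β - 1) + cos θ (cos θ - cos α))`. -/
theorem directional_derivative_of_cosine_angle
    {d : ℕ} (hd : 1 ≤ d)
    (A Ainf : Matrix (Fin d) (Fin d) ℝ)
    (hA : IsUnit A) (hAinf : IsUnit Ainf)
    (x ξ : EuclideanSpace ℝ (Fin d)) (hx : x ≠ 0) (hξ : ξ ≠ 0)
    (w winf : EuclideanSpace ℝ (Fin d))
    (hw : w = (WithLp.toLp 2 (A.mulVec ξ) : EuclideanSpace ℝ (Fin d)))
    (hwinf : winf = (WithLp.toLp 2 (Ainf.mulVec ξ) : EuclideanSpace ℝ (Fin d)))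
    (cθ cα cβ : ℝ)
    (hcθ : cθ = (inner ℝ x winf : ℝ) / (‖x‖ * ‖winf‖))
    (hcα : cα = (inner ℝ x w : ℝ) / (‖x‖ * ‖w‖))
    (hcβ : cβ = (inner ℝ w winf : ℝ) / (‖w‖ * ‖winf‖)) :
    fderiv ℝ (fun y : EuclideanSpace ℝ (Fin d) =>
        (inner ℝ y winf : ℝ) / (‖y‖ * ‖winf‖)) x w
      = ‖w‖ / ‖x‖ * (cβ - cα * cθ) ∧
    ‖w‖ / ‖x‖ * (cβ - cα * cθ)
      = ‖w‖ / ‖x‖ * ((1 - cθ ^ 2) + (cβ - 1) + cθ * (cθ - cα)) :=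
  directional_derivative_of_cosine_angle_general x hx w winf cθ cα cβ hcθ hcα hcβ
end

section
/- (Bound on time spent in a cube.) Suppose x : [0,T] → ℝ^d is C¹ and there exist v ∈ ℝ^d and ε ∈ (0, |v|/2) with |ẋ(t) - v| ≤ ε for all t. Then for every axis-parallel cube Q ⊂ ℝ^d of side length ℓ, the set {t ∈ [0,T] : x(t) ∈ Q} is contained in an interval of length at most 2√d ℓ / |v|. -/
open scoped RealInnerProductSpace

/-- **Bound on the time spent in a cube.**
If `x : [0,T] → ℝ^d` is C¹ with `|ẋ(t) - v| ≤ ε < |v|/2` for all `t`, then for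
every axis-parallel cube of side `ℓ` the set of times at which `x(t)` lies in
the cube is contained in an interval of length at most `2√d ℓ / |v|`. -/
theorem time_in_cube_bound
    {d : ℕ} (hd : 1 ≤ d) (T : ℝ) (hT : 0 ≤ T)
    (x x' : ℝ → EuclideanSpace ℝ (Fin d)) (v : EuclideanSpace ℝ (Fin d))
    (ε ℓ : ℝ) (hv : v ≠ 0) (hε : 0 < ε) (hεv : ε < ‖v‖ / 2) (hℓ : 0 ≤ ℓ)
    (hx : ∀ t ∈ Set.Icc (0:ℝ) T, HasDerivAt x (x' t) t)
    (hx' : ∀ t ∈ Set.Icc (0:ℝ) T, ‖x' t - v‖ ≤ ε)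
    (a : Fin d → ℝ) :
    ∃ t₀ : ℝ,
      {t ∈ Set.Icc (0:ℝ) T | ∀ i, x t i ∈ Set.Icc (a i) (a i + ℓ)}
        ⊆ Set.Icc t₀ (t₀ + 2 * Real.sqrt d * ℓ / ‖v‖) := by
  set S := {t ∈ Set.Icc (0:ℝ) T | ∀ i, x t i ∈ Set.Icc (a i) (a i + ℓ)} with hSdef
  rcases S.eq_empty_or_nonempty with h | h
  · exact ⟨0, by simp [h]⟩
  have hvpos : 0 < ‖v‖ := norm_pos_iff.mpr hv
  have hLnn : 0 ≤ 2 * Real.sqrt d * ℓ / ‖v‖ := by positivity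
  -- derivative of t ↦ ⟪x t, v⟫
  have hderiv : ∀ τ ∈ Set.Icc (0:ℝ) T,
      HasDerivAt (fun u => ⟪x u, v⟫) ⟪x' τ, v⟫ τ := by
    intro τ hτ
    have := (hx τ hτ).inner ℝ (hasDerivAt_const τ v)
    simpa using this
  -- lower bound on the derivative
  have hdlb : ∀ τ ∈ Set.Icc (0:ℝ) T, ‖v‖^2 / 2 ≤ ⟪x' τ, v⟫ := by
    intro τ hτ
    have h1 : ⟪x' τ, v⟫ = ⟪x' τ - v, v⟫ + ⟪v, v⟫ := by
      rw [inner_sub_left]; ring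
    have h2 : |⟪x' τ - v, v⟫| ≤ ‖x' τ - v‖ * ‖v‖ := abs_real_inner_le_norm _ _
    have h3 : ‖x' τ - v‖ * ‖v‖ ≤ ε * ‖v‖ :=
      mul_le_mul_of_nonneg_right (hx' τ hτ) hvpos.le
    have h4 : ⟪v, v⟫ = ‖v‖^2 := real_inner_self_eq_norm_sq v
    have h5 : ε * ‖v‖ ≤ ‖v‖ / 2 * ‖v‖ := mul_le_mul_of_nonneg_right hεv.le hvpos.le
    rw [h1, h4]
    nlinarith [abs_le.mp h2]
  -- key growth estimate
  have key : ∀ s ∈ S, ∀ t ∈ S, s ≤ t → t - s ≤ 2 * Real.sqrt d * ℓ / ‖v‖ := by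
    intro s hs t ht hst
    have hgrow := Convex.mul_sub_le_image_sub_of_le_deriv (convex_Icc (0:ℝ) T)
      (f := fun u => ⟪x u, v⟫)
      (fun τ hτ => (hderiv τ hτ).continuousAt.continuousWithinAt)
      (fun τ hτ => ((hderiv τ (interior_subset hτ)).differentiableAt).differentiableWithinAt)
      (C := ‖v‖^2 / 2)
      (fun τ hτ => by
        rw [(hderiv τ (interior_subset hτ)).deriv]
        exact hdlb τ (interior_subset hτ))
      s hs.1 t ht.1 hst
    have hinner : (⟪x t, v⟫ : ℝ) - ⟪x s, v⟫ = ⟪x t - x s, v⟫ := by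
      rw [inner_sub_left]
    -- bound ‖x t - x s‖ ≤ √d ℓ
    have hnorm : ‖x t - x s‖ ≤ Real.sqrt d * ℓ := by
      have heq : Real.sqrt d * ℓ = Real.sqrt (d * ℓ^2) := by
        rw [Real.sqrt_mul (Nat.cast_nonneg d), Real.sqrt_sq hℓ]
      rw [EuclideanSpace.norm_eq, heq]
      apply Real.sqrt_le_sqrt
      have hterm : ∀ i : Fin d, ‖(x t - x s) i‖^2 ≤ ℓ^2 := by
        intro i
        have h1 := ht.2 i
        have h2 := hs.2 i
        have habs : |x t i - x s i| ≤ ℓ :=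
          abs_sub_le_iff.mpr ⟨by linarith [h1.2, h2.1], by linarith [h2.2, h1.1]⟩
        have : (x t - x s) i = x t i - x s i := rfl
        rw [this, Real.norm_eq_abs, ← abs_pow]
        calc |(x t i - x s i)^2| = |x t i - x s i|^2 := by rw [abs_pow, sq_abs]
          _ ≤ ℓ^2 := by nlinarith [abs_nonneg (x t i - x s i)]
      calc (∑ i, ‖(x t - x s) i‖^2) ≤ ∑ i : Fin d, ℓ^2 :=
            Finset.sum_le_sum (fun i _ => hterm i)
        _ = d * ℓ^2 := by simp [Finset.sum_const, mul_comm]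
    have hub : (⟪x t - x s, v⟫ : ℝ) ≤ Real.sqrt d * ℓ * ‖v‖ := by
      calc (⟪x t - x s, v⟫ : ℝ) ≤ ‖x t - x s‖ * ‖v‖ := real_inner_le_norm _ _
        _ ≤ Real.sqrt d * ℓ * ‖v‖ := mul_le_mul_of_nonneg_right hnorm hvpos.le
    have : ‖v‖^2 / 2 * (t - s) ≤ Real.sqrt d * ℓ * ‖v‖ := by
      rw [hinner] at hgrow; linarith
    rw [le_div_iff₀ hvpos]
    nlinarith [Real.sqrt_nonneg (d:ℝ)]
  have hbdd : BddBelow S := ⟨0, fun t ht => ht.1.1⟩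
  refine ⟨sInf S, fun t ht => ⟨csInf_le hbdd ht, ?_⟩⟩
  have h1 : t - 2 * Real.sqrt d * ℓ / ‖v‖ ≤ sInf S := by
    apply le_csInf h
    intro s hs
    rcases le_total s t with hst | hst
    · linarith [key s hs t ht hst]
    · linarith
  linarith
end
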